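/- For any integer k ≥ 1, the game Σ_{i=1}^k ↑^i is incomparable with ∗, while Σ_{i=1}^k ↑^i + ↑^k is strictly greater than ∗. -/

import Mathlib

namespace SetTheory

universe u

/-- Pre-games, as in Mathlib before combinatorial game theory was removed from it. -/
inductive PGame : Type (u + 1)
  | mk : ∀ α β : Type u, (α → PGame) → (β → PGame) → PGame

namespace PGame

def LeftMoves : PGame.{u} → Type u
  | mk l _ _ _ => l

def RightMoves : PGame.{u} → Type u
  | mk _ r _ _ => r

def moveLeft : ∀ g : PGame.{u}, LeftMoves g → PGame.{u}
  | mk _ _ L _ => L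

def moveRight : ∀ g : PGame.{u}, RightMoves g → PGame.{u}
  | mk _ _ _ R => R

instance : Zero PGame.{u} :=
  ⟨⟨PEmpty, PEmpty, PEmpty.elim, PEmpty.elim⟩⟩

def star : PGame.{u} :=
  ⟨PUnit, PUnit, fun _ => 0, fun _ => 0⟩

def neg : PGame.{u} → PGame.{u}
  | mk l r L R => mk r l (fun i => neg (R i)) (fun i => neg (L i))

instance : Neg PGame.{u} :=
  ⟨neg⟩

def addAux (xl xr : Type u) (addL : xl → PGame.{u} → PGame.{u})
    (addR : xr → PGame.{u} → PGame.{u}) : PGame.{u} → PGame.{u}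
  | mk yl yr yL yR =>
    mk (xl ⊕ yl) (xr ⊕ yr)
      (Sum.elim (fun i => addL i (mk yl yr yL yR)) (fun i => addAux xl xr addL addR (yL i)))
      (Sum.elim (fun i => addR i (mk yl yr yL yR)) (fun i => addAux xl xr addL addR (yR i)))

def add : PGame.{u} → PGame.{u} → PGame.{u}
  | mk xl xr xL xR => addAux xl xr (fun i => add (xL i)) (fun i => add (xR i))

instance : Add PGame.{u} :=
  ⟨add⟩

instance : Sub PGame.{u} :=
  ⟨fun x y => x + -y⟩

/-- `(leLF x y).1` is `x ≤ y` and `(leLF x y).2` is `x ⧏ y`. -/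
def leLFAux (xl xr : Type u) (lfL : xl → PGame.{u} → Prop × Prop)
    (lfR : xr → PGame.{u} → Prop × Prop) : PGame.{u} → Prop × Prop
  | mk yl yr yL yR =>
    ((∀ i, (lfL i (mk yl yr yL yR)).2) ∧ ∀ j, (leLFAux xl xr lfL lfR (yR j)).2,
      (∃ i, (leLFAux xl xr lfL lfR (yL i)).1) ∨ ∃ j, (lfR j (mk yl yr yL yR)).1)

def leLF : PGame.{u} → PGame.{u} → Prop × Prop
  | mk xl xr xL xR => leLFAux xl xr (fun i => leLF (xL i)) (fun j => leLF (xR j))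

instance : LE PGame.{u} :=
  ⟨fun x y => (leLF x y).1⟩

def LF (x y : PGame.{u}) : Prop :=
  ¬y ≤ x

instance : LT PGame.{u} :=
  ⟨fun x y => x ≤ y ∧ LF x y⟩

def Fuzzy (x y : PGame.{u}) : Prop :=
  LF x y ∧ LF y x

end PGame

end SetTheory

open SetTheory

open scoped PGame

namespace SeqCompound

open Classical in
/-- The sequential compound `G → H` of two pregames. -/
noncomputable def seqc : PGame → PGame → PGame
  | PGame.mk α β L R, H =>
    if Nonempty α then
      if Nonempty β then
        PGame.mk α β (fun a => seqc (L a) H) (fun b => seqc (R b) H)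
      else
        PGame.mk α H.RightMoves (fun a => seqc (L a) H) H.moveRight
    else
      if Nonempty β then
        PGame.mk H.LeftMoves β H.moveLeft (fun b => seqc (R b) H)
      else H

/-- A pregame is dicotic (all-small) if in every subposition,
Left has an option iff Right has an option. -/
def Dicotic : PGame → Prop
  | PGame.mk α β L R =>
    (Nonempty α ↔ Nonempty β) ∧ (∀ a, Dicotic (L a)) ∧ (∀ b, Dicotic (R b))

/-- The canonical nonnegative integer game `{n-1 | }`. -/
def intGame : ℕ → PGame
  | 0 => 0
  | n + 1 => PGame.mk PUnit PEmpty (fun _ => intGame n) PEmpty.elim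

/-- `upSum k` is the disjunctive sum `↑¹ + ↑² + ⋯ + ↑ᵏ`. -/
def upSum : ℕ → PGame
  | 0 => 0
  | k + 1 => upSum k +
      PGame.mk PUnit PUnit (fun _ => 0) (fun _ => PGame.star - upSum k)

/-- `upPow k` is the game `↑^(k+1) = {0 | ∗ - (↑¹ + ⋯ + ↑ᵏ)}`. -/
def upPow (k : ℕ) : PGame :=
  PGame.mk PUnit PUnit (fun _ => 0) (fun _ => PGame.star - upSum k)

/-- Sequential compound of a list of games. -/
noncomputable def seqList : List PGame → PGame
  | [] => 0
  | G :: l => seqc G (seqList l)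

end SeqCompound

/-!
Write `Sₖ = ↑¹ + ⋯ + ↑ᵏ`. Right can move `Sₖ₊₁ = Sₖ + ↑^(k+1)` to `Sₖ + (∗ - Sₖ) = ∗`, so
`Sₖ₊₁ ⧏ ∗`. Hence the Right option `∗ - Sₖ` of `↑^(k+1)` is not `≤ 0`, so `↑^(k+1) > 0`, all
`Sₖ ≥ 0`, and `∗ ⧏ Sₖ₊₁` because the Right option `0` of `∗` is `≤ Sₖ₊₁`.
The same computation shows that every Right option of `Sₖ` is `≥ ∗`; therefore every Right option
of `Sₖ₊₁ + ↑^(k+1)` exceeds `∗`, and together with `Sₖ₊₁ + ↑^(k+1) > 0` this gives `∗ ≤ Sₖ₊₁ + ↑^(k+1)`.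

All arithmetic happens in pregames modulo equivalence, which form a partially ordered abelian group.
-/

namespace SetTheory

namespace PGame

infixl:50 " ⧏ " => LF

theorem leLF_fst_mk {xl xr : Type u} {xL : xl → PGame.{u}} {xR : xr → PGame.{u}}
    {yl yr : Type u} {yL : yl → PGame.{u}} {yR : yr → PGame.{u}} :
    (leLF (mk xl xr xL xR) (mk yl yr yL yR)).1 ↔
      (∀ i, (leLF (xL i) (mk yl yr yL yR)).2) ∧ ∀ j, (leLF (mk xl xr xL xR) (yR j)).2 :=
  Iff.rfl

theorem leLF_snd_mk {xl xr : Type u} {xL : xl → PGame.{u}} {xR : xr → PGame.{u}}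
    {yl yr : Type u} {yL : yl → PGame.{u}} {yR : yr → PGame.{u}} :
    (leLF (mk xl xr xL xR) (mk yl yr yL yR)).2 ↔
      (∃ i, (leLF (mk xl xr xL xR) (yL i)).1) ∨ ∃ j, (leLF (xR j) (mk yl yr yL yR)).1 :=
  Iff.rfl

theorem leLF_snd_iff_not_fst (x y : PGame.{u}) :
    ((leLF x y).2 ↔ ¬(leLF y x).1) ∧ ((leLF y x).2 ↔ ¬(leLF x y).1) := by
  induction x generalizing y with
  | mk xl xr xL xR ihxl ihxr =>
    induction y with
    | mk yl yr yL yR ihyl ihyr =>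
      have h1 := fun i => (ihyl i).2
      have h2 := fun j => (ihxr j (mk yl yr yL yR)).2
      have h3 := fun i => (ihxl i (mk yl yr yL yR)).1
      have h4 := fun j => (ihyr j).1
      rw [leLF_snd_mk, leLF_fst_mk, leLF_snd_mk, leLF_fst_mk]
      constructor
      · simp only [h1, h2, not_and_or, not_forall, not_not]
      · simp only [h3, h4, not_and_or, not_forall, not_not]

theorem lf_iff_leLF_snd {x y : PGame} : x ⧏ y ↔ (leLF x y).2 :=
  (leLF_snd_iff_not_fst x y).1.symm

theorem le_iff_forall_lf {x y : PGame} :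
    x ≤ y ↔ (∀ i, x.moveLeft i ⧏ y) ∧ ∀ j, x ⧏ y.moveRight j := by
  cases x; cases y; simp only [lf_iff_leLF_snd]; exact leLF_fst_mk

theorem lf_iff_exists_le {x y : PGame} :
    x ⧏ y ↔ (∃ i, x ≤ y.moveLeft i) ∨ ∃ j, x.moveRight j ≤ y := by
  cases x; cases y; rw [lf_iff_leLF_snd]; exact leLF_snd_mk

theorem not_le {x y : PGame} : ¬x ≤ y ↔ y ⧏ x := Iff.rfl

theorem lf_of_le_moveLeft {x y : PGame} {i : y.LeftMoves} (h : x ≤ y.moveLeft i) : x ⧏ y :=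
  lf_iff_exists_le.2 (Or.inl ⟨i, h⟩)

theorem lf_of_moveRight_le {x y : PGame} {j : x.RightMoves} (h : x.moveRight j ≤ y) : x ⧏ y :=
  lf_iff_exists_le.2 (Or.inr ⟨j, h⟩)

theorem moveLeft_lf_of_le {x y : PGame} (h : x ≤ y) (i : x.LeftMoves) : x.moveLeft i ⧏ y :=
  (le_iff_forall_lf.1 h).1 i

theorem lf_moveRight_of_le {x y : PGame} (h : x ≤ y) (j : y.RightMoves) : x ⧏ y.moveRight j :=
  (le_iff_forall_lf.1 h).2 j

theorem le_of_forall_lf {x y : PGame} (h₁ : ∀ i, x.moveLeft i ⧏ y) (h₂ : ∀ j, x ⧏ y.moveRight j) :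
    x ≤ y :=
  le_iff_forall_lf.2 ⟨h₁, h₂⟩

theorem le_trans_of_options {x y z : PGame}
    (h₁ : ∀ {i}, y ≤ z → z ≤ x.moveLeft i → y ≤ x.moveLeft i)
    (h₂ : ∀ {j}, z.moveRight j ≤ x → x ≤ y → z.moveRight j ≤ y) (hxy : x ≤ y) (hyz : y ≤ z) :
    x ≤ z :=
  le_of_forall_lf (fun i => not_le.1 fun h => moveLeft_lf_of_le hxy i (h₁ hyz h))
    fun j => not_le.1 fun h => lf_moveRight_of_le hyz j (h₂ h hxy)

/-- Transitivity is proved for all three rotations at once, so that the induction on `(x, y, z)`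
can use each of them at the options. -/
theorem le_trans_cyclic (x y z : PGame) :
    (x ≤ y → y ≤ z → x ≤ z) ∧ (y ≤ z → z ≤ x → y ≤ x) ∧ (z ≤ x → x ≤ y → z ≤ y) := by
  induction x generalizing y z with
  | mk xl xr xL xR IHxl IHxr =>
    induction y generalizing z with
    | mk yl yr yL yR IHyl IHyr =>
      induction z with
      | mk zl zr zL zR IHzl IHzr =>
        exact ⟨le_trans_of_options (fun {i} => (IHxl i _ _).2.1) fun {j} => (IHzr j).2.2,
          le_trans_of_options (fun {i} => (IHyl i _).2.2) fun {j} => (IHxr j _ _).1,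
          le_trans_of_options (fun {i} => (IHzl i).1) fun {j} => (IHyr j _).2.1⟩

instance : Preorder PGame where
  le_refl x := by
    induction x with
    | mk xl xr xL xR ihl ihr =>
      exact le_of_forall_lf (fun i => lf_of_le_moveLeft (i := i) (ihl i))
        (fun j => lf_of_moveRight_le (j := j) (ihr j))
  le_trans x y z := (le_trans_cyclic x y z).1
  lt_iff_le_not_ge _ _ := Iff.rfl

theorem lf_of_lt {x y : PGame} (h : x < y) : x ⧏ y := h.2

theorem zero_lf_star : (0 : PGame.{u}) ⧏ star :=
  lf_of_le_moveLeft (i := PUnit.unit) le_rfl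

theorem star_lf_of_zero_le {x : PGame.{u}} (h : 0 ≤ x) : star ⧏ x :=
  lf_of_moveRight_le (j := PUnit.unit) h

theorem star_le_of_zero_lf {x : PGame.{u}} (h₀ : 0 ⧏ x) (hR : ∀ j, star ⧏ x.moveRight j) :
    star ≤ x :=
  le_of_forall_lf (fun _ => h₀) hR

theorem zero_le_of_forall_zero_lf {x : PGame.{u}} (h : ∀ j, 0 ⧏ x.moveRight j) : 0 ≤ x :=
  le_of_forall_lf (fun i => PEmpty.elim i) h

instance setoid : Setoid PGame :=
  ⟨fun x y => x ≤ y ∧ y ≤ x, ⟨fun _ => ⟨le_rfl, le_rfl⟩, fun h => ⟨h.2, h.1⟩,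
    fun h₁ h₂ => ⟨h₁.1.trans h₂.1, h₂.2.trans h₁.2⟩⟩⟩

theorem equiv_of_exists {x y : PGame}
    (hl₁ : ∀ i, ∃ j, x.moveLeft i ≈ y.moveLeft j) (hr₁ : ∀ i, ∃ j, x.moveRight i ≈ y.moveRight j)
    (hl₂ : ∀ j, ∃ i, x.moveLeft i ≈ y.moveLeft j) (hr₂ : ∀ j, ∃ i, x.moveRight i ≈ y.moveRight j) :
    x ≈ y := by
  refine ⟨le_of_forall_lf (fun i => ?_) (fun j => ?_), le_of_forall_lf (fun j => ?_) (fun i => ?_)⟩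
  · obtain ⟨j, hj⟩ := hl₁ i
    exact lf_of_le_moveLeft hj.1
  · obtain ⟨i, hi⟩ := hr₂ j
    exact lf_of_moveRight_le hi.1
  · obtain ⟨i, hi⟩ := hl₂ j
    exact lf_of_le_moveLeft hi.2
  · obtain ⟨j, hj⟩ := hr₁ i
    exact lf_of_moveRight_le hj.2

theorem forall_rightMoves_add {x y : PGame} {P : PGame → Prop} :
    (∀ j, P ((x + y).moveRight j)) ↔
      (∀ i, P (x.moveRight i + y)) ∧ ∀ i, P (x + y.moveRight i) := by
  cases x; cases y
  exact ⟨fun h => ⟨fun i => h (Sum.inl i), fun i => h (Sum.inr i)⟩,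
    fun h => Sum.rec h.1 h.2⟩

theorem add_lf_of_left_moveRight_le {x y z : PGame} {j : x.RightMoves}
    (h : x.moveRight j + y ≤ z) : x + y ⧏ z := by
  cases x; cases y
  exact lf_of_moveRight_le (j := Sum.inl j) h

theorem add_lf_of_right_moveRight_le {x y z : PGame} {j : y.RightMoves}
    (h : x + y.moveRight j ≤ z) : x + y ⧏ z := by
  cases x; cases y
  exact lf_of_moveRight_le (j := Sum.inr j) h

theorem lf_add_of_le_left_moveLeft {x y z : PGame} {i : x.LeftMoves}
    (h : z ≤ x.moveLeft i + y) : z ⧏ x + y := by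
  cases x; cases y
  exact lf_of_le_moveLeft (i := Sum.inl i) h

theorem lf_add_of_le_right_moveLeft {x y z : PGame} {i : y.LeftMoves}
    (h : z ≤ x + y.moveLeft i) : z ⧏ x + y := by
  cases x; cases y
  exact lf_of_le_moveLeft (i := Sum.inr i) h

theorem add_comm_equiv (x y : PGame.{u}) : x + y ≈ y + x := by
  induction x generalizing y with
  | mk xl xr xL xR ihxl ihxr =>
    induction y with
    | mk yl yr yL yR ihyl ihyr =>
      refine equiv_of_exists ?_ ?_ ?_ ?_
      · rintro (i | i)
        · exact ⟨Sum.inr i, ihxl i _⟩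
        · exact ⟨Sum.inl i, ihyl i⟩
      · rintro (i | i)
        · exact ⟨Sum.inr i, ihxr i _⟩
        · exact ⟨Sum.inl i, ihyr i⟩
      · rintro (i | i)
        · exact ⟨Sum.inr i, ihyl i⟩
        · exact ⟨Sum.inl i, ihxl i _⟩
      · rintro (i | i)
        · exact ⟨Sum.inr i, ihyr i⟩
        · exact ⟨Sum.inl i, ihxr i _⟩

theorem add_assoc_equiv (x y z : PGame.{u}) : x + y + z ≈ x + (y + z) := by
  induction x generalizing y z with
  | mk xl xr xL xR ihxl ihxr =>
    induction y generalizing z with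
    | mk yl yr yL yR ihyl ihyr =>
      induction z with
      | mk zl zr zL zR ihzl ihzr =>
        refine equiv_of_exists ?_ ?_ ?_ ?_
        · rintro ((i | i) | i)
          · exact ⟨Sum.inl i, ihxl i _ _⟩
          · exact ⟨Sum.inr (Sum.inl i), ihyl i _⟩
          · exact ⟨Sum.inr (Sum.inr i), ihzl i⟩
        · rintro ((i | i) | i)
          · exact ⟨Sum.inl i, ihxr i _ _⟩
          · exact ⟨Sum.inr (Sum.inl i), ihyr i _⟩
          · exact ⟨Sum.inr (Sum.inr i), ihzr i⟩
        · rintro (i | i | i)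
          · exact ⟨Sum.inl (Sum.inl i), ihxl i _ _⟩
          · exact ⟨Sum.inl (Sum.inr i), ihyl i _⟩
          · exact ⟨Sum.inr i, ihzl i⟩
        · rintro (i | i | i)
          · exact ⟨Sum.inl (Sum.inl i), ihxr i _ _⟩
          · exact ⟨Sum.inl (Sum.inr i), ihyr i _⟩
          · exact ⟨Sum.inr i, ihzr i⟩

theorem zero_add_equiv (x : PGame.{u}) : 0 + x ≈ x := by
  induction x with
  | mk xl xr xL xR ihl ihr =>
    refine equiv_of_exists ?_ ?_ (fun i => ⟨Sum.inr i, ihl i⟩) (fun i => ⟨Sum.inr i, ihr i⟩)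
    · rintro (i | i)
      · exact i.elim
      · exact ⟨i, ihl i⟩
    · rintro (i | i)
      · exact i.elim
      · exact ⟨i, ihr i⟩

theorem neg_add_equiv_zero (x : PGame.{u}) : -x + x ≈ 0 := by
  induction x with
  | mk xl xr xL xR ihl ihr =>
    constructor
    · refine le_of_forall_lf ?_ (fun j => j.elim)
      rintro (i | i)
      · exact add_lf_of_right_moveRight_le (j := i) (ihr i).1
      · exact add_lf_of_left_moveRight_le (x := -mk xl xr xL xR) (j := i) (ihl i).1
    · refine le_of_forall_lf (fun i => i.elim) ?_
      rintro (i | i)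
      · exact lf_add_of_le_right_moveLeft (i := i) (ihl i).2
      · exact lf_add_of_le_left_moveLeft (x := -mk xl xr xL xR) (i := i) (ihr i).2

theorem neg_le_neg_and_neg_lf_neg (x y : PGame.{u}) :
    (x ≤ y → -y ≤ -x) ∧ (x ⧏ y → -y ⧏ -x) := by
  induction x generalizing y with
  | mk xl xr xL xR ihxl ihxr =>
    induction y with
    | mk yl yr yL yR ihyl ihyr =>
      constructor
      · intro h
        exact le_of_forall_lf (fun i => (ihyr i).2 (lf_moveRight_of_le h i))
          (fun j => (ihxl j _).2 (moveLeft_lf_of_le h j))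
      · intro h
        rcases lf_iff_exists_le.1 h with ⟨i, hi⟩ | ⟨j, hj⟩
        · exact lf_of_moveRight_le (j := i) ((ihyl i).1 hi)
        · exact lf_of_le_moveLeft (i := j) ((ihxr j _).1 hj)

theorem add_le_add_right_and_add_lf_add_right (x y z : PGame.{u}) :
    (x ≤ y → x + z ≤ y + z) ∧ (x ⧏ y → x + z ⧏ y + z) := by
  induction x generalizing y z with
  | mk xl xr xL xR ihxl ihxr =>
    induction y generalizing z with
    | mk yl yr yL yR ihyl ihyr =>
      induction z with
      | mk zl zr zL zR ihzl ihzr =>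
        constructor
        · intro h
          refine le_of_forall_lf ?_ ?_
          · rintro (i | k)
            · exact (ihxl i _ _).2 (moveLeft_lf_of_le h i)
            · exact lf_of_le_moveLeft (i := Sum.inr k) ((ihzl k).1 h)
          · rintro (j | k)
            · exact (ihyr j _).2 (lf_moveRight_of_le h j)
            · exact lf_of_moveRight_le (j := Sum.inr k) ((ihzr k).1 h)
        · intro h
          rcases lf_iff_exists_le.1 h with ⟨i, hi⟩ | ⟨j, hj⟩
          · exact lf_of_le_moveLeft (i := Sum.inl i) ((ihyl i _).1 hi)
          · exact lf_of_moveRight_le (j := Sum.inl j) ((ihxr j _ _).1 hj)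

theorem add_le_add_right' {x y : PGame} (h : x ≤ y) (z : PGame) : x + z ≤ y + z :=
  (add_le_add_right_and_add_lf_add_right x y z).1 h

theorem add_le_add_left' {x y : PGame} (h : x ≤ y) (z : PGame) : z + x ≤ z + y :=
  (add_comm_equiv z x).1.trans ((add_le_add_right' h z).trans (add_comm_equiv y z).1)

theorem add_congr {a b c d : PGame} (hab : a ≈ b) (hcd : c ≈ d) : a + c ≈ b + d :=
  ⟨(add_le_add_right' hab.1 c).trans (add_le_add_left' hcd.1 b),
    (add_le_add_right' hab.2 d).trans (add_le_add_left' hcd.2 a)⟩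

theorem neg_congr {a b : PGame} (h : a ≈ b) : -a ≈ -b :=
  ⟨(neg_le_neg_and_neg_lf_neg b a).1 h.2, (neg_le_neg_and_neg_lf_neg a b).1 h.1⟩

end PGame

/-- Not an `abbrev`: Mathlib's generic preorder on `Quotient` would then shadow the order below. -/
def Game : Type (u + 1) := Quotient PGame.setoid.{u}

namespace Game

open PGame

def mk : PGame.{u} → Game.{u} := Quotient.mk _

instance : Add Game :=
  ⟨Quotient.map₂ (· + ·) fun _ _ ha _ _ hb => add_congr ha hb⟩

instance : Neg Game :=
  ⟨Quotient.map Neg.neg fun _ _ h => neg_congr h⟩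

instance : Zero Game :=
  ⟨mk 0⟩

instance : AddCommGroup Game where
  add_assoc := by
    rintro ⟨a⟩ ⟨b⟩ ⟨c⟩
    exact Quotient.sound (add_assoc_equiv a b c)
  zero_add := by
    rintro ⟨a⟩
    exact Quotient.sound (zero_add_equiv a)
  add_zero := by
    rintro ⟨a⟩
    exact Quotient.sound (Setoid.trans (add_comm_equiv a 0) (zero_add_equiv a))
  neg_add_cancel := by
    rintro ⟨a⟩
    exact Quotient.sound (neg_add_equiv_zero a)
  add_comm := by
    rintro ⟨a⟩ ⟨b⟩
    exact Quotient.sound (add_comm_equiv a b)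
  nsmul := nsmulRec
  zsmul := zsmulRec

instance : LE Game :=
  ⟨Quotient.lift₂ (· ≤ ·) fun _ _ _ _ ha hb =>
    propext ⟨fun h => (ha.2.trans h).trans hb.1, fun h => (ha.1.trans h).trans hb.2⟩⟩

instance : LT Game :=
  ⟨fun a b => a ≤ b ∧ ¬b ≤ a⟩

instance : PartialOrder Game where
  le_refl := by
    rintro ⟨a⟩
    exact le_refl a
  le_trans := by
    rintro ⟨a⟩ ⟨b⟩ ⟨c⟩
    exact le_trans (α := PGame)
  le_antisymm := by
    rintro ⟨a⟩ ⟨b⟩ h₁ h₂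
    exact Quotient.sound ⟨h₁, h₂⟩
  lt_iff_le_not_ge _ _ := Iff.rfl

instance : IsOrderedAddMonoid Game where
  add_le_add_left := by
    rintro ⟨a⟩ ⟨b⟩ h ⟨c⟩
    exact add_le_add_right' h c

theorem mk_add (a b : PGame) : mk (a + b) = mk a + mk b := rfl

theorem mk_sub (a b : PGame) : mk (a - b) = mk a - mk b := rfl

theorem mk_zero : mk 0 = 0 := rfl

theorem mk_le_mk {a b : PGame} : mk a ≤ mk b ↔ a ≤ b := Iff.rfl

theorem mk_lt_mk {a b : PGame} : mk a < mk b ↔ a < b := Iff.rfl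

end Game

end SetTheory

namespace SeqCompound

open PGame Game

theorem upSum_succ (k : ℕ) : upSum (k + 1) = upSum k + upPow k :=
  rfl

theorem upPow_moveRight (k : ℕ) (j : (upPow k).RightMoves) :
    (upPow k).moveRight j = star - upSum k :=
  rfl

theorem upSum_lf_star : ∀ k, upSum k ⧏ star
  | 0 => zero_lf_star
  | k + 1 => by
    rw [upSum_succ]
    refine add_lf_of_right_moveRight_le (j := PUnit.unit) ?_
    change upSum k + (star - upSum k) ≤ star
    rw [← mk_le_mk, mk_add, mk_sub, add_sub_cancel]

theorem zero_lt_upPow (k : ℕ) : 0 < upPow k := by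
  refine ⟨zero_le_of_forall_zero_lf fun j => ?_, lf_of_le_moveLeft (i := PUnit.unit) le_rfl⟩
  rw [upPow_moveRight, ← not_le, ← mk_le_mk, mk_sub, mk_zero, sub_nonpos, mk_le_mk]
  exact upSum_lf_star k

theorem zero_le_upSum : ∀ k, 0 ≤ upSum k
  | 0 => le_rfl
  | k + 1 => by
    rw [← mk_le_mk, mk_zero, upSum_succ, mk_add]
    exact add_nonneg (zero_le_upSum k) (zero_lt_upPow k).le

theorem star_le_upSum_moveRight : ∀ k (j : (upSum k).RightMoves), star ≤ (upSum k).moveRight j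
  | 0, j => PEmpty.elim j
  | k + 1, j => by
    refine (forall_rightMoves_add (x := upSum k) (y := upPow k) (P := (star ≤ ·))).2
      ⟨fun i => ?_, fun i => ?_⟩ j
    · rw [← mk_le_mk, mk_add]
      exact le_add_of_le_of_nonneg (star_le_upSum_moveRight k i) (zero_lt_upPow k).le
    · rw [upPow_moveRight, ← mk_le_mk, mk_add, mk_sub, add_sub_cancel]

theorem star_lt_upSum_succ_add_upPow_moveRight (k : ℕ)
    (j : (upSum (k + 1) + upPow k).RightMoves) : star < (upSum (k + 1) + upPow k).moveRight j := by
  refine forall_rightMoves_add.2 ⟨fun i => ?_, fun i => ?_⟩ j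
  · rw [← mk_lt_mk, mk_add]
    exact lt_add_of_le_of_pos (star_le_upSum_moveRight _ i) (zero_lt_upPow k)
  · rw [upPow_moveRight, ← mk_lt_mk, mk_add, mk_sub, upSum_succ, mk_add]
    have h := zero_lt_upPow k
    rw [← mk_lt_mk, mk_zero] at h
    calc mk star < mk star + mk (upPow k) := lt_add_of_pos_right _ h
      _ = mk (upSum k) + mk (upPow k) + (mk star - mk (upSum k)) := by abel

end SeqCompound

open SeqCompound in
/-- for `k ≥ 1`, `↑¹ + ⋯ + ↑ᵏ` is incomparable with `∗`, while
`↑¹ + ⋯ + ↑ᵏ + ↑ᵏ > ∗` (here `upSum (k+1) = ↑¹ + ⋯ + ↑^(k+1)` and `upPow k = ↑^(k+1)`). -/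
theorem upSum_fuzzy_star_lt (k : ℕ) :
    PGame.Fuzzy (upSum (k + 1)) PGame.star ∧
      PGame.star < upSum (k + 1) + upPow k := by
  have hpos : 0 < upSum (k + 1) + upPow k := by
    rw [← Game.mk_lt_mk, Game.mk_add]
    exact add_pos_of_nonneg_of_pos (zero_le_upSum _) (zero_lt_upPow k)
  exact ⟨⟨upSum_lf_star _, PGame.star_lf_of_zero_le (zero_le_upSum _)⟩,
    PGame.star_le_of_zero_lf (PGame.lf_of_lt hpos)
      fun j => PGame.lf_of_lt (star_lt_upSum_succ_add_upPow_moveRight k j),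
    PGame.star_lf_of_zero_le hpos.le⟩
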